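/- The group generated by t1 = [[ω⁻¹,0],[0,ω]], t2 = [[ω⁻²,3ω],[0,ω²]], t3 = [[ω,0],[ω²,ω⁻¹]] (and −I) contains the elementary matrices [[1,3u],[0,1]] and [[1,0],[u,1]] for every unit u ∈ {±1,±ω,±ω⁻¹} of Z[ω]. -/

import Mathlib

/-- `ω = e^{πi/3}`, a primitive sixth root of unity. -/
noncomputable def ω : ℂ := Complex.exp (Real.pi * Complex.I / 3)

lemma ω_ne_zero : ω ≠ 0 := Complex.exp_ne_zero _

/-- The spin generator `t₁` as an element of `SL₂(ℂ)`. -/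
noncomputable def T₁ : Matrix.SpecialLinearGroup (Fin 2) ℂ :=
  ⟨!![ω⁻¹, 0; 0, ω], by
    simp [Matrix.det_fin_two_of, inv_mul_cancel₀ ω_ne_zero]⟩

/-- The spin generator `t₂` as an element of `SL₂(ℂ)`. -/
noncomputable def T₂ : Matrix.SpecialLinearGroup (Fin 2) ℂ :=
  ⟨!![(ω⁻¹)^2, 3 * ω; 0, ω^2], by
    simp [Matrix.det_fin_two_of]
    exact inv_mul_cancel₀ (pow_ne_zero 2 ω_ne_zero)⟩

/-- The spin generator `t₃` as an element of `SL₂(ℂ)`. -/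
noncomputable def T₃ : Matrix.SpecialLinearGroup (Fin 2) ℂ :=
  ⟨!![ω, 0; ω^2, ω⁻¹], by
    simp [Matrix.det_fin_two_of, mul_inv_cancel₀ ω_ne_zero]⟩

/-- `-I` as an element of `SL₂(ℂ)`. -/
noncomputable def negI : Matrix.SpecialLinearGroup (Fin 2) ℂ :=
  ⟨-1, by simp [Matrix.det_neg]⟩

/-- The upper elementary matrix `[[1, 3u],[0,1]]` in `SL₂(ℂ)`. -/
noncomputable def upperElem (u : ℂ) : Matrix.SpecialLinearGroup (Fin 2) ℂ :=
  ⟨!![1, 3 * u; 0, 1], by simp [Matrix.det_fin_two_of]⟩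

/-- The lower elementary matrix `[[1, 0],[u,1]]` in `SL₂(ℂ)`. -/
noncomputable def lowerElem (u : ℂ) : Matrix.SpecialLinearGroup (Fin 2) ℂ :=
  ⟨!![1, 0; u, 1], by simp [Matrix.det_fin_two_of]⟩

/-! Conjugation by `t₁` multiplies the corner entry of an upper elementary matrix by `-ω` and
that of a lower one by `ω²`, while inversion negates it. Hence the set of `u` whose elementary
matrix lies in the group is stable under multiplication by `ω`. It contains `1`, since
`t₂⁻¹t₁⁻⁴ = [[1,3],[0,1]]` and `t₃⁻¹t₁⁻¹ = [[1,0],[1,1]]`, so it contains every power of `ω`,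
and these are the six units. -/

lemma pow_mem_of_forall_mul_mem {M : Type*} [Monoid M] {S : Set M} {a : M} (h1 : 1 ∈ S)
    (ha : ∀ x ∈ S, a * x ∈ S) (k : ℕ) : a ^ k ∈ S := by
  induction k with
  | zero => simpa using h1
  | succ k ih => simpa [pow_succ'] using ha _ ih

lemma ω_pow_three : ω ^ 3 = -1 := by
  rw [ω, ← Complex.exp_nat_mul]
  push_cast
  rw [mul_div_cancel₀ _ three_ne_zero, Complex.exp_pi_mul_I]

lemma ω_inv : ω⁻¹ = -ω ^ 2 := by
  rw [inv_eq_of_mul_eq_one_right]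
  linear_combination -ω_pow_three

lemma exists_ω_pow_eq {u : ℂ} (hu : u ∈ ({1, -1, ω, -ω, ω⁻¹, -ω⁻¹} : Set ℂ)) :
    ∃ k : ℕ, ω ^ k = u := by
  rcases hu with rfl | rfl | rfl | rfl | rfl | rfl
  · exact ⟨0, pow_zero ω⟩
  · exact ⟨3, ω_pow_three⟩
  · exact ⟨1, pow_one ω⟩
  · exact ⟨4, by linear_combination ω * ω_pow_three⟩
  · exact ⟨5, by rw [ω_inv]; linear_combination ω ^ 2 * ω_pow_three⟩
  · exact ⟨2, by rw [ω_inv, neg_neg]⟩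

lemma upperElem_neg (a : ℂ) : upperElem (-a) = (upperElem a)⁻¹ := by
  refine Matrix.SpecialLinearGroup.ext _ _ ?_; intro i j
  simp only [Matrix.SpecialLinearGroup.coe_inv]
  fin_cases i <;> fin_cases j <;> simp [upperElem, Matrix.adjugate_fin_two]

lemma lowerElem_neg (a : ℂ) : lowerElem (-a) = (lowerElem a)⁻¹ := by
  refine Matrix.SpecialLinearGroup.ext _ _ ?_; intro i j
  simp only [Matrix.SpecialLinearGroup.coe_inv]
  fin_cases i <;> fin_cases j <;> simp [lowerElem, Matrix.adjugate_fin_two]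

lemma T₁_mul_upperElem_mul_inv (u : ℂ) : T₁ * upperElem u * T₁⁻¹ = upperElem (-ω * u) := by
  refine Matrix.SpecialLinearGroup.ext _ _ ?_; intro i j
  simp only [Matrix.SpecialLinearGroup.coe_mul, Matrix.SpecialLinearGroup.coe_inv]
  fin_cases i <;> fin_cases j <;>
    simp [T₁, upperElem, Matrix.adjugate_fin_two, Matrix.mul_apply, Fin.sum_univ_two, ω_inv] <;>
    grind [ω_pow_three]

lemma T₁_mul_lowerElem_mul_inv (u : ℂ) : T₁ * lowerElem u * T₁⁻¹ = lowerElem (ω ^ 2 * u) := by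
  refine Matrix.SpecialLinearGroup.ext _ _ ?_; intro i j
  simp only [Matrix.SpecialLinearGroup.coe_mul, Matrix.SpecialLinearGroup.coe_inv]
  fin_cases i <;> fin_cases j <;>
    simp [T₁, lowerElem, Matrix.adjugate_fin_two, Matrix.mul_apply, Fin.sum_univ_two, ω_inv] <;>
    grind [ω_pow_three]

lemma upperElem_one : upperElem 1 = T₂⁻¹ * T₁⁻¹ ^ 4 := by
  refine Matrix.SpecialLinearGroup.ext _ _ ?_; intro i j
  simp only [Matrix.SpecialLinearGroup.coe_mul, Matrix.SpecialLinearGroup.coe_inv,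
    Matrix.SpecialLinearGroup.coe_pow]
  fin_cases i <;> fin_cases j <;>
    simp [T₁, T₂, upperElem, Matrix.adjugate_fin_two, Matrix.mul_apply, Fin.sum_univ_two, pow_succ,
      ω_inv] <;>
    grind [ω_pow_three]

lemma lowerElem_one : lowerElem 1 = T₃⁻¹ * T₁⁻¹ := by
  refine Matrix.SpecialLinearGroup.ext _ _ ?_; intro i j
  simp only [Matrix.SpecialLinearGroup.coe_mul, Matrix.SpecialLinearGroup.coe_inv]
  fin_cases i <;> fin_cases j <;>
    simp [T₁, T₃, lowerElem, Matrix.adjugate_fin_two, Matrix.mul_apply, Fin.sum_univ_two, ω_inv] <;>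
    grind [ω_pow_three]

abbrev spinSubgroup : Subgroup (Matrix.SpecialLinearGroup (Fin 2) ℂ) :=
  Subgroup.closure {T₁, T₂, T₃, negI}

lemma T₁_mem_spinSubgroup : T₁ ∈ spinSubgroup := Subgroup.subset_closure (by simp)

lemma T₂_mem_spinSubgroup : T₂ ∈ spinSubgroup := Subgroup.subset_closure (by simp)

lemma T₃_mem_spinSubgroup : T₃ ∈ spinSubgroup := Subgroup.subset_closure (by simp)

lemma upperElem_one_mem_spinSubgroup : upperElem 1 ∈ spinSubgroup := by
  rw [upperElem_one]
  exact mul_mem (inv_mem T₂_mem_spinSubgroup) (pow_mem (inv_mem T₁_mem_spinSubgroup) 4)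

lemma lowerElem_one_mem_spinSubgroup : lowerElem 1 ∈ spinSubgroup := by
  rw [lowerElem_one]
  exact mul_mem (inv_mem T₃_mem_spinSubgroup) (inv_mem T₁_mem_spinSubgroup)

lemma T₁_mul_mul_inv_mem_spinSubgroup {g : Matrix.SpecialLinearGroup (Fin 2) ℂ}
    (hg : g ∈ spinSubgroup) :
    T₁ * g * T₁⁻¹ ∈ spinSubgroup :=
  mul_mem (mul_mem T₁_mem_spinSubgroup hg) (inv_mem T₁_mem_spinSubgroup)

lemma upperElem_ω_mul_mem_spinSubgroup {u : ℂ} (hu : upperElem u ∈ spinSubgroup) :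
    upperElem (ω * u) ∈ spinSubgroup := by
  rw [show ω * u = -(-ω * u) by ring, upperElem_neg, ← T₁_mul_upperElem_mul_inv]
  exact inv_mem (T₁_mul_mul_inv_mem_spinSubgroup hu)

lemma lowerElem_ω_mul_mem_spinSubgroup {u : ℂ} (hu : lowerElem u ∈ spinSubgroup) :
    lowerElem (ω * u) ∈ spinSubgroup := by
  rw [show ω * u = -(ω ^ 2 * (ω ^ 2 * u)) by linear_combination ω * u * ω_pow_three,
    lowerElem_neg, ← T₁_mul_lowerElem_mul_inv, ← T₁_mul_lowerElem_mul_inv]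
  exact inv_mem (T₁_mul_mul_inv_mem_spinSubgroup (T₁_mul_mul_inv_mem_spinSubgroup hu))

/-- The group generated by `t₁, t₂, t₃` (and `-I`) contains the elementary
matrices `[[1,3u],[0,1]]` and `[[1,0],[u,1]]` for every unit
`u ∈ {±1, ±ω, ±ω⁻¹}` of `ℤ[ω]`. -/
theorem elementary_matrices_in_spin_group :
    ∀ u : ℂ, u ∈ ({1, -1, ω, -ω, ω⁻¹, -ω⁻¹} : Set ℂ) →
      upperElem u ∈ Subgroup.closure {T₁, T₂, T₃, negI} ∧
      lowerElem u ∈ Subgroup.closure {T₁, T₂, T₃, negI} := by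
  intro u hu
  obtain ⟨k, rfl⟩ := exists_ω_pow_eq hu
  exact ⟨pow_mem_of_forall_mul_mem (S := {u | upperElem u ∈ spinSubgroup})
      upperElem_one_mem_spinSubgroup (fun _ => upperElem_ω_mul_mem_spinSubgroup) k,
    pow_mem_of_forall_mul_mem (S := {u | lowerElem u ∈ spinSubgroup})
      lowerElem_one_mem_spinSubgroup (fun _ => lowerElem_ω_mul_mem_spinSubgroup) k⟩
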